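/- Let F be any field. (i) If (C_i)_{i∈I} is a directed system of subfields of F, then Λ_F(∪_{i∈I} C_i) = ∪_{i∈I} Λ_F C_i. (ii) If C ⊆ E ⊆ F is a tower of subfields of F with F/E separable, then Λ_E C = Λ_F C. -/
import Mathlib


open scoped Classical

namespace SepPaper

variable {F : Type*} [Field F]

/-- The image of a set under `x ↦ x ^ p`. -/
def pPow (p : ℕ) (S : Set F) : Set F := (fun x => x ^ p) '' S

/-- `F^(p)`: the set of all `p`-th powers of the field `F`. -/
def pPowers (p : ℕ) (F : Type*) [Field F] : Set F := Set.range fun x : F => x ^ p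

/-- `F^(p)C(S)`: the subfield of `F` generated by all `p`-th powers together with the
sets `C` and `S`. -/
def pSpan (p : ℕ) (C S : Set F) : Subfield F :=
  Subfield.closure (pPowers p F ∪ C ∪ S)

/-- `A` is `p`-independent in `F` over `C`: no `a ∈ A` lies in `F^(p)C(A \ {a})`. -/
def PIndep (p : ℕ) (C A : Set F) : Prop :=
  ∀ a ∈ A, a ∉ pSpan p C (A \ {a})

/-- `A` is a `p`-basis of `F` over `C`: `p`-independent and `p`-spanning over `C`. -/
def PBasis (p : ℕ) (C A : Set F) : Prop :=
  PIndep p C A ∧ pSpan p C A = ⊤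

/-- `A` is a `p`-basis over `C` of the subfield of `F` with carrier `E`:
`A ⊆ E`, `A` is `p`-independent in `E` over `C`, and `E = E^(p)C(A)`. -/
def PBasisOfSet (p : ℕ) (E C A : Set F) : Prop :=
  A ⊆ E ∧ (∀ x ∈ A, x ∉ Subfield.closure (pPow p E ∪ C ∪ (A \ {x}))) ∧
    E ⊆ ↑(Subfield.closure (pPow p E ∪ C ∪ A))

/-- `l` represents the (finitely supported) family `(λ^B_I(a))_{I ∈ p^{[|B|]}}`:
all multi-indices in the support have entries `< p`, and
`a = Σ_I B^I · (l I)^p`. -/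
def IsLambdaFam (p : ℕ) (B : Set F) (a : F) (l : (↥B →₀ ℕ) →₀ F) : Prop :=
  (∀ I ∈ l.support, ∀ t : ↥B, I t < p) ∧
    a = l.sum fun I y => (I.prod fun t k => (t : F) ^ k) * y ^ p

/-- The family of parameterized lambda functions `I ↦ λ^B_I(a)`
(defined to be `0` when no defining family exists; when `B` is `p`-independent and
`a ∈ F^(p)(B)` the defining family exists and is unique). -/
noncomputable def lambdaFam (p : ℕ) (B : Set F) (a : F) : (↥B →₀ ℕ) → F :=
  if h : ∃ l, IsLambdaFam p B a l then ⇑h.choose else 0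

/-- `λ^B(a)` for a single element `a`: the set of values `λ^B_I(a)`, `I ∈ p^{[|B|]}`. -/
def lambdaVals (p : ℕ) (B : Set F) (a : F) : Set F :=
  {y | ∃ I : ↥B →₀ ℕ, (∀ t, I t < p) ∧ y = lambdaFam p B a I}

/-- `λ^B(A)` for a set `A`: all values `λ^B_I(a)` for `a ∈ A ∩ F^(p)(B)`. -/
def lambdaSet (p : ℕ) (B A : Set F) : Set F :=
  {y | ∃ a ∈ A ∩ (pSpan p ∅ B : Set F), y ∈ lambdaVals p B a}

/-- `E/C` is separable (with `p` the characteristic exponent): every `C`-linearly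
independent tuple of elements of `E` has `C`-linearly independent `p`-th powers.
This is MacLane's criterion, equivalent to `E` being linearly disjoint from
`C^{(p^{-1})}` over `C` inside an algebraic closure. Here `C` and `E` are the carrier
sets of subfields of the ambient field. -/
def SepExt (p : ℕ) (C E : Set F) : Prop :=
  ∀ (n : ℕ) (x : Fin n → F), (∀ i, x i ∈ E) →
    (∀ d : Fin n → F, (∀ i, d i ∈ C) → (∑ i, d i * x i) = 0 → ∀ i, d i = 0) →
    ∀ d : Fin n → F, (∀ i, d i ∈ C) → (∑ i, d i * x i ^ p) = 0 → ∀ i, d i = 0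

/-- `E/C` is separated: separable and `E = E^(p)C`. -/
def SeparatedExt (p : ℕ) (C E : Set F) : Prop :=
  SepExt p C E ∧ E = ↑(Subfield.closure (pPow p E ∪ C))

/-- `D` is the Lambda closure `Λ_F C` of `C` in `F`: the minimum subfield of `F`
containing `C` such that `F/D` is separable. -/
def IsLambdaClosure (p : ℕ) (C : Set F) (D : Subfield F) : Prop :=
  C ⊆ ↑D ∧ SepExt p (↑D) (Set.univ : Set F) ∧
    ∀ D' : Subfield F, C ⊆ ↑D' → SepExt p (↑D') (Set.univ : Set F) → D ≤ D'

/-- `Λ^1_F C`: the subfield of `F` generated over `C` by all values `λ^b_I(a)` for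
finite `b ⊆ C` that are `p`-independent in `F`, and `a ∈ F^(p)(b) ∩ C`. -/
def Lambda1 (p : ℕ) (C : Subfield F) : Subfield F :=
  Subfield.closure ((C : Set F) ∪ {y | ∃ b : Set F, b ⊆ (C : Set F) ∧ b.Finite ∧
    PIndep p ∅ b ∧ ∃ a ∈ (pSpan p ∅ b : Set F) ∩ (C : Set F), y ∈ lambdaVals p b a})

/-- The iterates `Λ^n_F C`. -/
def LambdaIter (p : ℕ) (C : Subfield F) : ℕ → Subfield F
  | 0 => C
  | n + 1 => Lambda1 p (LambdaIter p C n)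

/-- `A`, `B`, `r` describe the sequence `(ℓ^n_{F/c}(a))_n` of pairs obtained by iterating
the splitting-pairs map `Λ_{F/c}` starting from `(∅, a)`, over the subfield with carrier
`Cs` with chosen `p`-basis `c`.  `A n` and `B n` are the two components of the `n`-th
pair, and `r n` is the well-ordering of `B n` (each `B (n+1)` extending `B n` as an
initial segment).  The `step` condition encodes one application of the splitting-pairs
map: `A (n+1) = A n ⌢ pInd_{F/C(A n)}(B n)` and `B (n+1) = B n ⌢ λ^{c⌢A(n+1)}(B n)`,
where the set `s = pInd_{F/C(A n)}(B n)` is characterized by keeping, running through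
`B n` in its well-order, exactly those elements not in the `p`-span over `C(A n)` of
those already kept. -/
structure IsSplitSeq (p : ℕ) (Cs c a : Set F) (A B : ℕ → Set F)
    (r : ℕ → F → F → Prop) : Prop where
  initA : A 0 = ∅
  initB : B 0 = a
  wf : ∀ n, (B n).WellFoundedOn (r n)
  trans : ∀ n, ∀ x ∈ B n, ∀ y ∈ B n, ∀ z ∈ B n, r n x y → r n y z → r n x z
  total : ∀ n, ∀ x ∈ B n, ∀ y ∈ B n, x = y ∨ r n x y ∨ r n y x
  irrefl : ∀ n, ∀ x ∈ B n, ¬ r n x x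
  mono : ∀ n, B n ⊆ B (n + 1)
  compat : ∀ n, ∀ x ∈ B n, ∀ y ∈ B n, (r (n + 1) x y ↔ r n x y)
  append : ∀ n, ∀ x ∈ B n, ∀ y ∈ B (n + 1), y ∉ B n → r (n + 1) x y
  step : ∀ n, ∃ s ⊆ B n,
    (∀ x ∈ B n, x ∈ s ↔
        x ∉ pSpan p ↑(Subfield.closure (Cs ∪ A n)) (s ∩ {y | r n y x})) ∧
      A (n + 1) = A n ∪ s ∧ B (n + 1) = B n ∪ lambdaSet p (c ∪ A (n + 1)) (B n)

/-- The family `v` is a linear basis, over the subfield `K`, of the subspace of the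
ambient field with carrier `E`: every element of `E` has a unique representation as a
finite `K`-linear combination of the `v i`. -/
def IsLinBasisOf (K : Subfield F) {ι : Type*} (v : ι → F) (E : Set F) : Prop :=
  (∀ i, v i ∈ E) ∧
    ∀ x ∈ E, ∃! l : ι →₀ F, (∀ i, l i ∈ K) ∧ x = l.sum fun i k => k * v i

end SepPaper

namespace SepPaper

universe u


section AuxLemmas

variable {F : Type*} [Field F]

open Matrix in
/-- If the rows of a (rectangular) matrix over a field are linearly independent, then the
images of the rows under any ring endomorphism (applied entrywise) admit no nontrivial
linear relation. -/
lemma aux_lemA {K : Type*} [Field K] {n : ℕ} {ι : Type*} [Fintype ι] [DecidableEq ι]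
    (M : Matrix (Fin n) ι K) (h : LinearIndependent K (fun j => M j)) (φ : K →+* K)
    (δ : Fin n → K) (hrel : ∀ i, ∑ j, δ j * φ (M j i) = 0) : ∀ j, δ j = 0 := by
  have hrank : M.rank = n := by simpa using h.rank_matrix
  have htop : LinearMap.range M.mulVecLin = ⊤ := by
    apply Submodule.eq_top_of_finrank_eq
    rw [← Matrix.rank, hrank]; simp
  have hsurj : Function.Surjective M.mulVec := fun y => (LinearMap.range_eq_top.mp htop) y
  obtain ⟨P, hP⟩ := Matrix.mulVec_surjective_iff_exists_right_inverse.mp hsurj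
  have hmul : M.map φ * P.map φ = 1 := by
    rw [← Matrix.map_mul, hP, Matrix.map_one φ (map_zero φ) (map_one φ)]
  have h0 : δ ᵥ* (M.map φ) = 0 := by
    funext i
    simpa [Matrix.vecMul, dotProduct, Matrix.map] using hrel i
  have hz : δ = 0 := by
    calc δ = δ ᵥ* 1 := by simp
    _ = δ ᵥ* (M.map φ * P.map φ) := by rw [hmul]
    _ = (δ ᵥ* M.map φ) ᵥ* P.map φ := by rw [Matrix.vecMul_vecMul]
    _ = 0 := by rw [h0]; simp
  exact fun j => congrFun hz j

lemma aux_enum_fin {K : Subfield F} {t : Set F} (ht : t.Finite)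
    (hli : LinearIndependent ↥K ((↑) : t → F)) :
    ∃ (m : ℕ) (y : Fin m → F), Set.range y = t ∧ LinearIndependent ↥K y := by
  haveI := ht.fintype
  let e := (Fintype.equivFin ↥t).symm
  refine ⟨Fintype.card ↥t, fun k => ((e k : F)), ?_, hli.comp e e.injective⟩
  ext a
  constructor
  · rintro ⟨k, rfl⟩; exact (e k).2
  · intro ha; exact ⟨e.symm ⟨a, ha⟩, by simp [e]⟩

lemma aux_li_raw {K : Subfield F} {n : ℕ} {x : Fin n → F} (h : LinearIndependent ↥K x) :
    ∀ d : Fin n → F, (∀ i, d i ∈ K) → (∑ i, d i * x i) = 0 → ∀ i, d i = 0 := by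
  intro d hd hrel i
  have : (fun i => (⟨d i, hd i⟩ : ↥K)) i = 0 :=
    Fintype.linearIndependent_iff.mp h (fun i => ⟨d i, hd i⟩) hrel i
  exact congrArg Subtype.val this

/-- One reduction step for the transitivity of separability. -/
lemma aux_step {p : ℕ} [Fact p.Prime] [CharP F p] (K : Subfield F) (Eb : Set F)
    (hsep : SepExt p (K : Set F) Eb)
    {n : ℕ} (u : Fin n → F) (hu : ∀ j, u j ∈ Eb) (d : Fin n → F) (hd : ∀ j, d j ∈ K)
    (hrel : ∑ j, d j * u j ^ p = 0) :
    ∃ (m : ℕ) (c : Fin n → Fin m → ↥K) (y : Fin m → F),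
      (∀ j, ∑ k, (c j k : F) * y k = u j) ∧ ∀ k, ∑ j, d j * (c j k : F) ^ p = 0 := by
  classical
  obtain ⟨t, hts, htsp, htli⟩ := exists_linearIndependent ↥K (Set.range u)
  obtain ⟨m, y, hyr, hyli⟩ := aux_enum_fin ((Set.finite_range u).subset hts) htli
  have hco : ∀ j, ∃ c : Fin m → ↥K, (∑ k, c k • y k) = u j := by
    intro j
    rw [← Submodule.mem_span_range_iff_exists_fun, hyr, htsp]
    exact Submodule.subset_span ⟨j, rfl⟩
  choose c hc using hco
  have hc' : ∀ j, ∑ k, (c j k : F) * y k = u j := hc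
  have hxp : ∀ j, u j ^ p = ∑ k, ((c j k : F)) ^ p * y k ^ p := by
    intro j
    rw [← hc' j, sum_pow_char]
    exact Finset.sum_congr rfl fun k _ => mul_pow _ _ _
  have hrel2 : ∑ k, (∑ j, d j * (c j k : F) ^ p) * y k ^ p = 0 := by
    calc ∑ k, (∑ j, d j * (c j k : F) ^ p) * y k ^ p
        = ∑ k, ∑ j, d j * ((c j k : F) ^ p * y k ^ p) := by
          simp_rw [Finset.sum_mul, mul_assoc]
      _ = ∑ j, ∑ k, d j * ((c j k : F) ^ p * y k ^ p) := Finset.sum_comm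
      _ = ∑ j, d j * u j ^ p := by
          simp_rw [← Finset.mul_sum, ← hxp]
      _ = 0 := hrel
  refine ⟨m, c, y, hc', ?_⟩
  have hyE : ∀ k, y k ∈ Eb := by
    intro k
    have : y k ∈ t := hyr ▸ ⟨k, rfl⟩
    obtain ⟨j, hj⟩ := hts this
    exact hj ▸ hu j
  exact hsep m y hyE (aux_li_raw hyli) (fun k => ∑ j, d j * (c j k : F) ^ p)
    (fun k => K.sum_mem fun j _ => mul_mem (hd j) (pow_mem (c j k).2 p)) hrel2

set_option synthInstance.maxHeartbeats 1000000 in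
set_option maxHeartbeats 1000000 in
/-- Transitivity of separability, prime characteristic case. -/
lemma aux_sepExt_trans' {p : ℕ} [Fact p.Prime] [CharP F p] (D E : Subfield F) (hDE : D ≤ E)
    (h1 : SepExt p (D : Set F) (E : Set F)) (h2 : SepExt p (E : Set F) (Set.univ : Set F)) :
    SepExt p (D : Set F) (Set.univ : Set F) := by
  classical
  intro n x _ hli d hd hrel
  obtain ⟨m, c, y, hcy, hrel1⟩ :=
    aux_step E Set.univ h2 x (fun _ => Set.mem_univ _) d (fun j => hDE (hd j)) hrel
  have hstep2 : ∀ k : Fin m, ∃ (r : ℕ) (T : Fin n → Fin r → ↥D) (z : Fin r → F),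
      (∀ j, ∑ l, (T j l : F) * z l = (c j k : F)) ∧
        ∀ l, ∑ j, d j * (T j l : F) ^ p = 0 := by
    intro k
    exact aux_step D (E : Set F) h1 (fun j => (c j k : F)) (fun j => (c j k).2) d hd (hrel1 k)
  choose r T z hTz hrel2 using hstep2
  let M : Matrix (Fin n) ((k : Fin m) × Fin (r k)) ↥D := fun j i => T i.1 j i.2
  have hM : LinearIndependent ↥D (fun j => M j) := by
    rw [Fintype.linearIndependent_iff]
    intro g hg j
    have hgF : ∀ i : (k : Fin m) × Fin (r k), ∑ j, (g j : F) * (T i.1 j i.2 : F) = 0 := by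
      intro i
      have h0 : (∑ j, g j • M j) i = 0 := by rw [hg]; rfl
      have h1' : ∑ j, g j * M j i = 0 := by
        simpa [Finset.sum_apply] using h0
      have := congrArg (Subfield.subtype D) h1'
      simpa [map_sum] using this
    have hck : ∀ k, ∑ j, (g j : F) * (c j k : F) = 0 := by
      intro k
      calc ∑ j, (g j : F) * (c j k : F)
          = ∑ j, (g j : F) * ∑ l, (T k j l : F) * z k l := by
            simp_rw [hTz]
        _ = ∑ j, ∑ l, (g j : F) * ((T k j l : F) * z k l) := by
            simp_rw [Finset.mul_sum]
        _ = ∑ l, ∑ j, (g j : F) * ((T k j l : F) * z k l) := Finset.sum_comm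
        _ = ∑ l, (∑ j, (g j : F) * (T k j l : F)) * z k l := by
            simp_rw [Finset.sum_mul, mul_assoc]
        _ = 0 := by
            refine Finset.sum_eq_zero fun l _ => ?_
            rw [hgF ⟨k, l⟩, zero_mul]
    have hx0 : ∑ j, (g j : F) * x j = 0 := by
      calc ∑ j, (g j : F) * x j
          = ∑ j, (g j : F) * ∑ k, (c j k : F) * y k := by simp_rw [hcy]
        _ = ∑ j, ∑ k, (g j : F) * ((c j k : F) * y k) := by simp_rw [Finset.mul_sum]
        _ = ∑ k, ∑ j, (g j : F) * ((c j k : F) * y k) := Finset.sum_comm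
        _ = ∑ k, (∑ j, (g j : F) * (c j k : F)) * y k := by
            simp_rw [Finset.sum_mul, mul_assoc]
        _ = 0 := by
            refine Finset.sum_eq_zero fun k _ => ?_
            rw [hck k, zero_mul]
    exact Subtype.ext (hli (fun j => (g j : F)) (fun j => (g j).2) hx0 j)
  have hrelD : ∀ i : (k : Fin m) × Fin (r k),
      ∑ j, (⟨d j, hd j⟩ : ↥D) * frobenius ↥D p (M j i) = 0 := by
    intro i
    have hF : ∑ j, d j * (T i.1 j i.2 : F) ^ p = 0 := hrel2 i.1 i.2
    apply Subtype.val_injective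
    push_cast [frobenius_def]
    simpa using hF
  have := aux_lemA M hM (frobenius ↥D p) (fun j => ⟨d j, hd j⟩) hrelD
  intro j
  exact congrArg Subtype.val (this j)

lemma aux_sepExt_one (C E : Set F) : SepExt 1 C E := by
  intro n x hx hli d hd hrel
  exact hli d hd (by simpa using hrel)

/-- Transitivity of separability. -/
lemma aux_sepExt_trans (p : ℕ) (hp : p = ringExpChar F) (D E : Subfield F) (hDE : D ≤ E)
    (h1 : SepExt p (D : Set F) (E : Set F)) (h2 : SepExt p (E : Set F) (Set.univ : Set F)) :
    SepExt p (D : Set F) (Set.univ : Set F) := by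
  obtain ⟨q, hq⟩ := CharP.exists F
  haveI := hq
  rcases CharP.char_is_prime_or_zero F q with hq' | hq'
  · haveI := Fact.mk hq'
    have hpq : p = q := by
      haveI : ExpChar F q := ExpChar.prime hq'
      rw [hp]
      exact ringExpChar.eq F q
    subst hpq
    exact aux_sepExt_trans' D E hDE h1 h2
  · subst hq'
    haveI : CharZero F := CharP.charP_to_charZero F
    have hp1 : p = 1 := by rw [hp]; exact ringExpChar.eq_one F
    subst hp1
    exact aux_sepExt_one _ _

end AuxLemmas

set_option maxHeartbeats 1000000 in
/-- Remark `lambda_1`.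
Let `F` be any field, of characteristic exponent `p`.
(i) If `(Cᵢ)` is a directed system of subfields of `F` then
`Λ_F (⋃ᵢ Cᵢ) = ⋃ᵢ Λ_F Cᵢ`.
(ii) If `C ⊆ E ⊆ F` is a tower of subfields with `F/E` separable, then
`Λ_E C = Λ_F C`; here `Λ_E C` is described as the minimum subfield `D` with
`C ⊆ D ⊆ E` and `E/D` separable. -/
theorem statement14 {F : Type u} [Field F] (p : ℕ) (hp : p = ringExpChar F) :
    (∀ (ι : Type u), Nonempty ι → ∀ Csys : ι → Subfield F, Directed (· ≤ ·) Csys →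
      ∀ Dsys : ι → Subfield F, (∀ i, IsLambdaClosure p (Csys i : Set F) (Dsys i)) →
      ∀ D : Subfield F, IsLambdaClosure p (⋃ i, (Csys i : Set F)) D →
        (D : Set F) = ⋃ i, (Dsys i : Set F)) ∧
    (∀ C E : Subfield F, C ≤ E → SepExt p (E : Set F) (Set.univ : Set F) →
      ∀ D₁ : Subfield F,
        ((C : Set F) ⊆ ↑D₁ ∧ D₁ ≤ E ∧ SepExt p (D₁ : Set F) (E : Set F) ∧
          ∀ D' : Subfield F, (C : Set F) ⊆ ↑D' → D' ≤ E →
            SepExt p (D' : Set F) (E : Set F) → D₁ ≤ D') →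
      ∀ D₂ : Subfield F, IsLambdaClosure p (C : Set F) D₂ → D₁ = D₂) := by
  constructor
  · -- Part (i): directed unions
    intro ι hne Csys hCdir Dsys hD D hD0
    haveI := hne
    have hDdir : Directed (· ≤ ·) Dsys := by
      intro i j
      obtain ⟨k, hik, hjk⟩ := hCdir i j
      refine ⟨k, ?_, ?_⟩
      · exact (hD i).2.2 (Dsys k) (fun a ha => (hD k).1 (hik ha)) (hD k).2.1
      · exact (hD j).2.2 (Dsys k) (fun a ha => (hD k).1 (hjk ha)) (hD k).2.1
    have hsup : ((⨆ i, Dsys i : Subfield F) : Set F) = ⋃ i, (Dsys i : Set F) :=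
      Subfield.coe_iSup_of_directed hDdir
    have hsep : SepExt p ((⨆ i, Dsys i : Subfield F) : Set F) (Set.univ : Set F) := by
      intro n x hx hli d hd hrel
      have hd' : ∀ i, ∃ j, d i ∈ Dsys j := by
        intro i
        have := hd i
        rw [hsup] at this
        exact Set.mem_iUnion.mp this
      choose jj hjj using hd'
      obtain ⟨k, hk⟩ := hDdir.finset_le (Finset.univ.image jj)
      refine (hD k).2.1 n x hx ?_ d ?_ hrel
      · intro e he hrel0
        refine hli e (fun i => ?_) hrel0
        rw [hsup]
        exact Set.mem_iUnion.mpr ⟨k, he i⟩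
      · intro i
        exact hk (jj i) (Finset.mem_image_of_mem _ (Finset.mem_univ i)) (hjj i)
    apply Set.Subset.antisymm
    · have hle : D ≤ ⨆ i, Dsys i := by
        refine hD0.2.2 _ ?_ hsep
        intro a ha
        obtain ⟨s, ⟨i, rfl⟩, hs⟩ := ha
        rw [hsup]
        exact Set.mem_iUnion.mpr ⟨i, (hD i).1 hs⟩
      rw [← hsup]
      exact hle
    · refine Set.iUnion_subset fun i => ?_
      refine (hD i).2.2 D (fun a ha => hD0.1 ?_) hD0.2.1
      exact Set.mem_iUnion.mpr ⟨i, ha⟩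
  · -- Part (ii): towers
    intro C E hCE hEsep D₁ hD₁ D₂ hD₂
    obtain ⟨hCD₁, hD₁E, hsep₁, hmin₁⟩ := hD₁
    obtain ⟨hCD₂, hsep₂, hmin₂⟩ := hD₂
    have hD₂E : D₂ ≤ E := hmin₂ E (fun a ha => hCE ha) hEsep
    have hsep₂E : SepExt p (D₂ : Set F) (E : Set F) := by
      intro n x hx hli d hd hrel
      exact hsep₂ n x (fun i => Set.mem_univ _) hli d hd hrel
    have h12 : D₁ ≤ D₂ := hmin₁ D₂ hCD₂ hD₂E hsep₂E
    have h21 : D₂ ≤ D₁ :=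
      hmin₂ D₁ hCD₁ (aux_sepExt_trans p hp D₁ E hD₁E hsep₁ hEsep)
    exact le_antisymm h12 h21

end SepPaper
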